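/- Let p ≥ 2 and let k be an integer with 1 < k < p. Consider real numbers x_1, …, x_{2p−1} satisfying: x_j ≥ 0 for all j; x_{2k−1} ≤ 1; and x_{i−1} + x_i − x_{i−2} − x_{i+1} ≥ −2 for all 1 ≤ i ≤ 2p (variables with index outside {1,…,2p−1} denote 0). Then the supremum of x_1 + x_{2p−1} − x_{2k−1} over all such x equals 2p² − p − 2(p−k)(2k+1) when p/2 < k < p, and equals 2p² − p − 2(k−1)(2p−2k+3) when 1 < k ≤ p/2. -/

import Mathlib

/-- Feasibility for the linear program of case 31 with `Γ` supported on `γ_{2k-1}`: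
variables `x 1, …, x (2p-1)` (indices outside this range denote `0`), all nonnegative,
`x (2k-1) ≤ 1`, and `x (i-1) + x i - x (i-2) - x (i+1) ≥ -2` for `1 ≤ i ≤ 2p`. -/
def Feasible1 (p k : ℕ) (x : ℤ → ℝ) : Prop :=
  (∀ j : ℤ, (j < 1 ∨ 2 * (p : ℤ) - 1 < j) → x j = 0) ∧
  (∀ j : ℤ, 1 ≤ j → j ≤ 2 * (p : ℤ) - 1 → 0 ≤ x j) ∧
  x (2 * (k : ℤ) - 1) ≤ 1 ∧
  (∀ i : ℤ, 1 ≤ i → i ≤ 2 * (p : ℤ) →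
    x (i - 1) + x i - x (i - 2) - x (i + 1) ≥ -2)

/-- Triangular number function on `ℤ`, clamped to `0` for negative arguments. -/
noncomputable def Tz (n : ℤ) : ℝ := if 0 ≤ n then ((n : ℝ) * ((n : ℝ) + 1)) / 2 else 0

lemma Tz_nonneg (n : ℤ) : 0 ≤ Tz n := by
  unfold Tz; split_ifs with h
  · have h' : (0:ℝ) ≤ (n:ℝ) := by exact_mod_cast h
    nlinarith
  · exact le_refl 0

lemma Tz_nonpos {n : ℤ} (h : n ≤ 0) : Tz n = 0 := by
  unfold Tz; split_ifs with h'
  · have hn : n = 0 := le_antisymm h h'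
    subst hn; norm_num
  · rfl

lemma Tz_mono {a b : ℤ} (h : a ≤ b) : Tz a ≤ Tz b := by
  unfold Tz; split_ifs with h1 h2 h3
  · have ha : (0:ℝ) ≤ (a:ℝ) := by exact_mod_cast h1
    have hab : (a:ℝ) ≤ (b:ℝ) := by exact_mod_cast h
    nlinarith
  · exfalso; omega
  · have hb : (0:ℝ) ≤ (b:ℝ) := by exact_mod_cast h3
    nlinarith
  · exact le_refl 0

lemma key_phi (n : ℤ) :
    Tz (n+1) + Tz n - Tz (n+2) - Tz (n-1)
      + (Tz (-n-2) + Tz (-n-1) - Tz (-n-3) - Tz (-n)) = -2 := by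
  unfold Tz
  split_ifs <;>
    first
      | (exfalso; omega)
      | (push_cast; ring)

/-- The optimal solution: a pair of triangular ramps meeting near index `c`. -/
noncomputable def xOpt (p : ℕ) (c : ℤ) : ℤ → ℝ :=
  fun j => if 1 ≤ j ∧ j ≤ 2*(p:ℤ) - 1 then Tz (c - j) + Tz (j - c - 1) else 0

lemma xOpt_in {p : ℕ} {c j : ℤ} (h1 : 1 ≤ j) (h2 : j ≤ 2*(p:ℤ) - 1) :
    xOpt p c j = Tz (c - j) + Tz (j - c - 1) := if_pos ⟨h1, h2⟩

lemma xOpt_out {p : ℕ} {c j : ℤ} (h : j < 1 ∨ 2*(p:ℤ) - 1 < j) :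
    xOpt p c j = 0 := if_neg (by omega)

lemma xOpt_feasible (p k : ℕ) (c : ℤ) (hp : 2 ≤ p) (hk1 : 1 < k) (hkp : k < p)
    (hc : c = 2*(k:ℤ) ∨ c = 2*(k:ℤ) - 3) : Feasible1 p k (xOpt p c) := by
  have hc1 : 1 ≤ c := by rcases hc with rfl | rfl <;> omega
  have hc2 : c ≤ 2*(p:ℤ) - 2 := by rcases hc with rfl | rfl <;> omega
  refine ⟨fun j hj => xOpt_out hj, fun j h1 h2 => ?_, ?_, ?_⟩
  · rw [xOpt_in h1 h2]; exact add_nonneg (Tz_nonneg _) (Tz_nonneg _)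
  · rw [xOpt_in (by omega) (by omega)]
    rcases hc with rfl | rfl
    · rw [show (2*(k:ℤ)) - (2*(k:ℤ)-1) = 1 by ring,
          show (2*(k:ℤ)-1) - (2*(k:ℤ)) - 1 = -2 by ring]
      norm_num [Tz]
    · rw [show (2*(k:ℤ)-3) - (2*(k:ℤ)-1) = -2 by ring,
          show (2*(k:ℤ)-1) - (2*(k:ℤ)-3) - 1 = 1 by ring]
      norm_num [Tz]
  · intro i hi1 hi2
    have key : ∀ m : ℤ, (Tz (c-(m-1)) + Tz (m-1-c-1)) + (Tz (c-m) + Tz (m-c-1))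
        - (Tz (c-(m-2)) + Tz (m-2-c-1)) - (Tz (c-(m+1)) + Tz (m+1-c-1)) = -2 := by
      intro m
      have h := key_phi (c - m)
      rw [show c-m+1 = c-(m-1) by ring, show c-m+2 = c-(m-2) by ring,
          show c-m-1 = c-(m+1) by ring,
          show -(c-m)-2 = m-1-c-1 by ring, show -(c-m)-1 = m-c-1 by ring,
          show -(c-m)-3 = m-2-c-1 by ring, show -(c-m) = m+1-c-1 by ring] at h
      linarith
    have hcase : i = 1 ∨ i = 2 ∨ (3 ≤ i ∧ i ≤ 2*(p:ℤ) - 2) ∨ i = 2*(p:ℤ) - 1 ∨ i = 2*(p:ℤ) := by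
      omega
    rcases hcase with rfl | rfl | ⟨h3, h4⟩ | rfl | rfl
    · -- i = 1 : x 0 + x 1 - x (-1) - x 2 ≥ -2
      rw [xOpt_out (p:=p) (c:=c) (by omega), xOpt_in (p:=p) (c:=c) (by omega) (by omega),
          xOpt_out (p:=p) (c:=c) (by omega), xOpt_in (p:=p) (c:=c) (by omega) (by omega)]
      have e1 : Tz (1-c-1) = 0 := Tz_nonpos (by omega)
      have e2 : Tz (1+1-c-1) = 0 := Tz_nonpos (by omega)
      have e3 := Tz_mono (show c-(1+1) ≤ c-1 by omega)
      linarith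
    · -- i = 2
      rw [xOpt_in (p:=p) (c:=c) (by omega) (by omega),
          xOpt_in (p:=p) (c:=c) (by omega) (by omega),
          xOpt_out (p:=p) (c:=c) (by omega),
          xOpt_in (p:=p) (c:=c) (by omega) (by omega)]
      have h := key 2
      have e1 := Tz_nonneg (c-(2-2))
      have e2 := Tz_nonneg (2-2-c-1)
      linarith
    · -- interior
      rw [xOpt_in (p:=p) (c:=c) (by omega) (by omega),
          xOpt_in (p:=p) (c:=c) (by omega) (by omega),
          xOpt_in (p:=p) (c:=c) (by omega) (by omega),
          xOpt_in (p:=p) (c:=c) (by omega) (by omega)]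
      have h := key i
      linarith
    · -- i = 2p - 1
      rw [xOpt_in (p:=p) (c:=c) (by omega) (by omega),
          xOpt_in (p:=p) (c:=c) (by omega) (by omega),
          xOpt_in (p:=p) (c:=c) (by omega) (by omega),
          xOpt_out (p:=p) (c:=c) (by omega)]
      have h := key (2*(p:ℤ)-1)
      have e1 := Tz_nonneg (c-(2*(p:ℤ)-1+1))
      have e2 := Tz_nonneg (2*(p:ℤ)-1+1-c-1)
      linarith
    · -- i = 2p
      rw [xOpt_in (p:=p) (c:=c) (by omega) (by omega),
          xOpt_out (p:=p) (c:=c) (by omega),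
          xOpt_in (p:=p) (c:=c) (by omega) (by omega),
          xOpt_out (p:=p) (c:=c) (by omega)]
      have h := key (2*(p:ℤ))
      have e1 : Tz (c-2*(p:ℤ)) = 0 := Tz_nonpos (by omega)
      have e2 : Tz (c-(2*(p:ℤ)+1)) = 0 := Tz_nonpos (by omega)
      have e3 := Tz_mono (show 2*(p:ℤ)-c-1 ≤ 2*(p:ℤ)+1-c-1 by omega)
      linarith

theorem stmt_1 (p k : ℕ) (hp : 2 ≤ p) (hk1 : 1 < k) (hkp : k < p) :
    IsLUB {v : ℝ | ∃ x : ℤ → ℝ, Feasible1 p k x ∧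
        v = x 1 + x (2 * (p : ℤ) - 1) - x (2 * (k : ℤ) - 1)}
      (if p < 2 * k then
        2 * (p : ℝ) ^ 2 - (p : ℝ) - 2 * ((p : ℝ) - (k : ℝ)) * (2 * (k : ℝ) + 1)
      else
        2 * (p : ℝ) ^ 2 - (p : ℝ) -
          2 * ((k : ℝ) - 1) * (2 * (p : ℝ) - 2 * (k : ℝ) + 3)) := by
  obtain ⟨j, rfl⟩ : ∃ j, k = j + 2 := ⟨k - 2, by omega⟩
  obtain ⟨m, rfl⟩ : ∃ m, p = j + m + 3 := ⟨p - (j + 3), by omega⟩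
  constructor
  · -- upper bound
    rintro v ⟨x, ⟨hz, hnn, hγ, hcons⟩, rfl⟩
    set o : ℕ → ℝ := fun m => x (2*(m:ℤ) - 1) with ho
    have hD : ∀ n : ℕ, n + 1 ≤ j + m + 3 → o (n+2) + o n ≤ 2 * o (n+1) + 4 := by
      intro n hn
      have h1 := hcons (2*(n:ℤ)+1) (by omega) (by omega)
      have h2 := hcons (2*(n:ℤ)+2) (by omega) (by omega)
      rw [show 2*(n:ℤ)+1-1 = 2*(n:ℤ) by ring, show 2*(n:ℤ)+1-2 = 2*(n:ℤ)-1 by ring,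
          show 2*(n:ℤ)+1+1 = 2*(n:ℤ)+2 by ring] at h1
      rw [show 2*(n:ℤ)+2-1 = 2*(n:ℤ)+1 by ring, show 2*(n:ℤ)+2-2 = 2*(n:ℤ) by ring,
          show 2*(n:ℤ)+2+1 = 2*(n:ℤ)+3 by ring] at h2
      have g0 : o n = x (2*(n:ℤ)-1) := congrFun ho n
      have g1 : o (n+1) = x (2*(n:ℤ)+1) := by
        rw [congrFun ho (n+1)]; congr 1; push_cast; ring
      have g2 : o (n+2) = x (2*(n:ℤ)+3) := by
        rw [congrFun ho (n+2)]; congr 1; push_cast; ring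
      rw [g0, g1, g2]
      linarith
    have hU : ∀ d a : ℕ, a + d ≤ j + m + 3 →
        o (a+1+d) - o (a+1) ≤ (d:ℝ) * (o (a+1) - o a) + 2*(d:ℝ)*((d:ℝ)+1) := by
      intro d
      induction d with
      | zero => intro a _; norm_num
      | succ d ih =>
        intro a ha
        have h1 := ih (a+1) (by omega)
        have h2 := hD a (by omega)
        have h3 : (d:ℝ) * (o (a+2) - o (a+1)) ≤ (d:ℝ) * (o (a+1) - o a + 4) := by
          apply mul_le_mul_of_nonneg_left (by linarith) (by positivity)
        rw [show a+1+(d+1) = a+1+1+d by omega]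
        push_cast
        have h1' : o (a+1+1+d) - o (a+1+1) ≤ (d:ℝ) * (o (a+1+1) - o (a+1)) + 2*(d:ℝ)*((d:ℝ)+1) := h1
        have e1 : o (a+1+1) = o (a+2) := by norm_num
        rw [e1] at h1'
        linarith
    have hL : ∀ d a : ℕ, a + d ≤ j + m + 3 →
        (d:ℝ) * (o (a+d+1) - o (a+d)) - 2*(d:ℝ)*((d:ℝ)+1) ≤ o (a+d) - o a := by
      intro d
      induction d with
      | zero => intro a _; norm_num
      | succ d ih =>
        intro a ha
        have h1 := ih a (by omega)
        have h2 := hD (a+d) (by omega)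
        have h3 : ((d:ℝ)+1) * (o (a+d+2) - o (a+d+1) - 4) ≤ ((d:ℝ)+1) * (o (a+d+1) - o (a+d)) := by
          apply mul_le_mul_of_nonneg_left (by linarith) (by positivity)
        rw [show a+(d+1)+1 = a+d+2 by omega, show a+(d+1) = a+d+1 by omega]
        push_cast
        linarith
    have gobj1 : x 1 = o 1 := by rw [congrFun ho 1]; norm_num
    have gobjp : x (2*((j+m+3 : ℕ):ℤ) - 1) = o (j+m+3) := (congrFun ho (j+m+3)).symm
    have gobjk : x (2*((j+2 : ℕ):ℤ) - 1) = o (j+2) := (congrFun ho (j+2)).symm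
    have hγ' : o (j+2) ≤ 1 := by rw [← gobjk]; exact hγ
    by_cases hreg : j + m + 3 < 2 * (j + 2)
    · -- regime 2 : p < 2k, i.e. m ≤ j
      rw [if_pos hreg]
      have hmj : m ≤ j := by omega
      have hok1 : 0 ≤ o (j+3) := by
        rw [congrFun ho (j+3)]; exact hnn _ (by omega) (by omega)
      have h1 := hL (j+1) 1 (by omega)
      have h2 := hU m (j+2) (by omega)
      rw [show 1+(j+1)+1 = j+3 by omega, show 1+(j+1) = j+2 by omega] at h1
      rw [show j+2+1+m = j+m+3 by omega, show j+2+1 = j+3 by omega] at h2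
      have e1 : ((m:ℝ) - (j:ℝ)) * o (j+3) ≤ 0 := by
        apply mul_nonpos_iff.mpr
        right
        constructor
        · have : (m:ℝ) ≤ (j:ℝ) := by exact_mod_cast hmj
          linarith
        · exact hok1
      have e2 : ((j:ℝ) - (m:ℝ) + 1) * o (j+2) ≤ ((j:ℝ) - (m:ℝ) + 1) := by
        have h0 : (0:ℝ) ≤ (j:ℝ) - (m:ℝ) + 1 := by
          have : (m:ℝ) ≤ (j:ℝ) := by exact_mod_cast hmj
          linarith
        calc ((j:ℝ) - (m:ℝ) + 1) * o (j+2) ≤ ((j:ℝ) - (m:ℝ) + 1) * 1 :=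
              mul_le_mul_of_nonneg_left hγ' h0
          _ = (j:ℝ) - (m:ℝ) + 1 := mul_one _
      rw [gobj1, gobjp, gobjk]
      push_cast at h1 h2 ⊢
      nlinarith [h1, h2, e1, e2]
    · -- regime 1 : 2k ≤ p, i.e. j + 1 ≤ m
      rw [if_neg hreg]
      have hmj : j + 1 ≤ m := by omega
      have hok1 : 0 ≤ o (j+1) := by
        rw [congrFun ho (j+1)]; exact hnn _ (by omega) (by omega)
      have h1 := hL j 1 (by omega)
      have h2 := hU (m+1) (j+1) (by omega)
      rw [show 1+j+1 = j+2 by omega, show 1+j = j+1 by omega] at h1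
      rw [show j+1+1+(m+1) = j+m+3 by omega, show j+1+1 = j+2 by omega] at h2
      have e1 : 0 ≤ ((m:ℝ) - (j:ℝ)) * o (j+1) := by
        apply mul_nonneg _ hok1
        have : (j:ℝ) + 1 ≤ (m:ℝ) := by exact_mod_cast hmj
        linarith
      have e2 : ((m:ℝ) - (j:ℝ) + 1) * o (j+2) ≤ ((m:ℝ) - (j:ℝ) + 1) := by
        have h0 : (0:ℝ) ≤ (m:ℝ) - (j:ℝ) + 1 := by
          have : (j:ℝ) + 1 ≤ (m:ℝ) := by exact_mod_cast hmj
          linarith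
        calc ((m:ℝ) - (j:ℝ) + 1) * o (j+2) ≤ ((m:ℝ) - (j:ℝ) + 1) * 1 :=
              mul_le_mul_of_nonneg_left hγ' h0
          _ = (m:ℝ) - (j:ℝ) + 1 := mul_one _
      rw [gobj1, gobjp, gobjk]
      push_cast at h1 h2 ⊢
      nlinarith [h1, h2, e1, e2]
  · -- least upper bound : the value is attained
    intro b hb
    by_cases hreg : j + m + 3 < 2 * (j + 2)
    · rw [if_pos hreg]
      refine hb ⟨xOpt (j+m+3) (2*((j+2:ℕ):ℤ)),
        xOpt_feasible _ _ _ (by omega) (by omega) (by omega) (Or.inl rfl), ?_⟩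
      rw [xOpt_in (by omega) (by omega), xOpt_in (by omega) (by omega),
          xOpt_in (by omega) (by omega)]
      have t1 : Tz (2*((j+2:ℕ):ℤ) - 1) = (2*((j:ℝ)+2) - 1) * (2*((j:ℝ)+2)) / 2 := by
        rw [Tz, if_pos (by omega)]; push_cast; ring
      have t2 : Tz (1 - 2*((j+2:ℕ):ℤ) - 1) = 0 := Tz_nonpos (by omega)
      have t3 : Tz (2*((j+2:ℕ):ℤ) - (2*((j+m+3:ℕ):ℤ) - 1)) = 0 := Tz_nonpos (by omega)
      have t4 : Tz (2*((j+m+3:ℕ):ℤ) - 1 - 2*((j+2:ℕ):ℤ) - 1) =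
          (2*((m:ℝ)+1) - 1 - 1) * (2*((m:ℝ)+1) - 1) / 2 := by
        rw [Tz, if_pos (by omega)]; push_cast; ring
      have t5 : Tz (2*((j+2:ℕ):ℤ) - (2*((j+2:ℕ):ℤ) - 1)) = Tz 1 := by norm_num
      have t6 : Tz (2*((j+2:ℕ):ℤ) - 1 - 2*((j+2:ℕ):ℤ) - 1) = 0 := Tz_nonpos (by omega)
      have t7 : Tz 1 = 1 := by norm_num [Tz]
      rw [t1, t2, t3, t4, t5, t6, t7]
      push_cast
      ring
    · rw [if_neg hreg]
      refine hb ⟨xOpt (j+m+3) (2*((j+2:ℕ):ℤ) - 3),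
        xOpt_feasible _ _ _ (by omega) (by omega) (by omega) (Or.inr rfl), ?_⟩
      rw [xOpt_in (by omega) (by omega), xOpt_in (by omega) (by omega),
          xOpt_in (by omega) (by omega)]
      have t1 : Tz (2*((j+2:ℕ):ℤ) - 3 - 1) = (2*((j:ℝ)+2) - 4) * (2*((j:ℝ)+2) - 3) / 2 := by
        rw [Tz, if_pos (by omega)]; push_cast; ring
      have t2 : Tz (1 - (2*((j+2:ℕ):ℤ) - 3) - 1) = 0 := Tz_nonpos (by omega)
      have t3 : Tz (2*((j+2:ℕ):ℤ) - 3 - (2*((j+m+3:ℕ):ℤ) - 1)) = 0 := Tz_nonpos (by omega)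
      have t4 : Tz (2*((j+m+3:ℕ):ℤ) - 1 - (2*((j+2:ℕ):ℤ) - 3) - 1) =
          (2*((j:ℝ)+(m:ℝ)+3) - 2*((j:ℝ)+2) + 1) * (2*((j:ℝ)+(m:ℝ)+3) - 2*((j:ℝ)+2) + 2) / 2 := by
        rw [Tz, if_pos (by omega)]; push_cast; ring
      have t5 : Tz (2*((j+2:ℕ):ℤ) - 3 - (2*((j+2:ℕ):ℤ) - 1)) = 0 := Tz_nonpos (by omega)
      have t6 : Tz (2*((j+2:ℕ):ℤ) - 1 - (2*((j+2:ℕ):ℤ) - 3) - 1) = Tz 1 := by norm_num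
      have t7 : Tz 1 = 1 := by norm_num [Tz]
      rw [t1, t2, t3, t4, t5, t6, t7]
      push_cast
      ring
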